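/- Let n = |F| and let α_1,...,α_n enumerate F. Let 2 ≤ ℓ+1 ≤ r ≤ n, let δ_1,...,δ_{ℓ+1} ∈ F be nonzero, and let S_ℓ = {i ∈ {1,...,n} \ {1,...,r} : ∃ 1 ≤ j < k ≤ ℓ such that (j,k) collide at i}. For 1 ≤ j ≤ ℓ, let T_j = {i ∈ {1,...,n} : α_i ∉ {α_j, α_{ℓ+1}} and (ℓ+1, j) collide at i}. Suppose that T_j ∩ ({1,...,r} ∪ S_ℓ) = ∅ for every 1 ≤ j ≤ ℓ. Then T_j ∩ T_k = ∅ for all 1 ≤ j < k ≤ ℓ. -/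

import Mathlib

/-- `x` and `y` lie in the same multiplicative coset of `B* = B \ {0}` inside `F`:
`x ∈ y·B*`, i.e. `x = y·b` for some nonzero `b ∈ B`. -/
def SameCoset (B : Type*) {F : Type*} [Field B] [Field F] [Algebra B F] (x y : F) : Prop :=
  ∃ b : B, b ≠ 0 ∧ x = y * algebraMap B F b

/-- The pair with multipliers `δa, δb` and points `αa, αb` collides at the point `αi`:
`αi ∉ {αa, αb}` and `(δa/(αi - αa))·B* = (δb/(αi - αb))·B*`. -/
def CollidesAt (B : Type*) {F : Type*} [Field B] [Field F] [Algebra B F]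
    (δa δb αa αb αi : F) : Prop :=
  αi ≠ αa ∧ αi ≠ αb ∧ SameCoset B (δa / (αi - αa)) (δb / (αi - αb))

/-! If `(ℓ+1, j)` and `(ℓ+1, k)` both collide at `α_i`, then so does `(j, k)`, because collision
at a fixed point is symmetric and transitive. Hence `i ∈ {1,…,r} ∪ S_ℓ`, which `T_j` avoids. -/

section Collision

variable {B F : Type*} [Field B] [Field F] [Algebra B F]

theorem SameCoset.symm {x y : F} (h : SameCoset B x y) : SameCoset B y x := by
  obtain ⟨b, hb, rfl⟩ := h
  exact ⟨b⁻¹, inv_ne_zero hb, by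
    rw [map_inv₀, mul_inv_cancel_right₀ ((map_ne_zero (algebraMap B F)).mpr hb)]⟩

theorem SameCoset.trans {x y z : F} (hxy : SameCoset B x y) (hyz : SameCoset B y z) :
    SameCoset B x z := by
  obtain ⟨b, hb, rfl⟩ := hxy
  obtain ⟨c, hc, rfl⟩ := hyz
  exact ⟨c * b, mul_ne_zero hc hb, by rw [map_mul, mul_assoc]⟩

theorem CollidesAt.symm {δa δb αa αb x : F} (h : CollidesAt B δa δb αa αb x) :
    CollidesAt B δb δa αb αa x :=
  ⟨h.2.1, h.1, h.2.2.symm⟩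

theorem CollidesAt.trans {δa δb δc αa αb αc x : F} (hab : CollidesAt B δa δb αa αb x)
    (hbc : CollidesAt B δb δc αb αc x) : CollidesAt B δa δc αa αc x :=
  ⟨hab.1, hbc.2.1, hab.2.2.trans hbc.2.2⟩

end Collision

/-- Let `n = |F|`, `α` enumerate `F`, `2 ≤ ℓ+1 ≤ r ≤ n`, let
`δ_1, …, δ_{ℓ+1}` be nonzero, and let
`S_ℓ = {i ∉ {1,…,r} : ∃ j < k ≤ ℓ, (j,k) collide at i}`. For `1 ≤ j ≤ ℓ` let
`T_j = {i : α_i ∉ {α_j, α_{ℓ+1}} ∧ (ℓ+1,j) collide at i}`. If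
`T_j ∩ ({1,…,r} ∪ S_ℓ) = ∅` for every `j`, then the sets `T_j` are pairwise
disjoint. -/
theorem collision_sets_pairwise_disjoint
    {B F : Type*} [Field B] [Field F] [Algebra B F]
    {n r ℓ : ℕ}
    (α : Fin n → F)
    (hℓr : ℓ + 1 ≤ r) (hrn : r ≤ n)
    (δ : Fin (ℓ + 1) → F)
    (S : Set (Fin n))
    (hS : S = {i : Fin n | r ≤ (i : ℕ) ∧ ∃ a b : Fin ℓ, a < b ∧
      CollidesAt B (δ (Fin.castSucc a)) (δ (Fin.castSucc b))
        (α (Fin.castLE (by omega) a)) (α (Fin.castLE (by omega) b)) (α i)})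
    (T : Fin ℓ → Set (Fin n))
    (hT : ∀ j : Fin ℓ, T j = {i : Fin n |
      CollidesAt B (δ (Fin.last ℓ)) (δ (Fin.castSucc j))
        (α ⟨ℓ, by omega⟩) (α (Fin.castLE (by omega) j)) (α i)})
    (hdisj : ∀ j : Fin ℓ, T j ∩ ({i : Fin n | (i : ℕ) < r} ∪ S) = ∅) :
    ∀ j k : Fin ℓ, j < k → T j ∩ T k = ∅ := by
  intro j k hjk
  refine Set.eq_empty_of_forall_notMem fun i ⟨hij, hik⟩ => ?_
  have hi : i ∉ {i : Fin n | (i : ℕ) < r} ∪ S :=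
    Set.disjoint_left.mp (Set.disjoint_iff_inter_eq_empty.mpr (hdisj j)) hij
  rw [Set.mem_union, not_or, Set.mem_ofPred_eq, not_lt, hS] at hi
  rw [hT] at hij hik
  exact hi.2 ⟨hi.1, j, k, hjk, hij.symm.trans hik⟩
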